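/- For all integers n ≥ 1 and 1 ≤ k ≤ n, the number of permutation tableaux of length n with exactly k rows equals the number of permutations π of [n] with exactly k weak excedances. -/

import Mathlib

/-- `P` is a linked partition of `[n] = {1,…,n}`: a collection of nonempty
subsets of `[n]` whose union is `[n]`, any two distinct blocks being nearly
disjoint. -/
def IsLinkedPartition (n : ℕ) (P : Finset (Finset ℕ)) : Prop :=
  (∀ B ∈ P, B.Nonempty ∧ B ⊆ Finset.Icc 1 n) ∧
  (∀ x ∈ Finset.Icc 1 n, ∃ B ∈ P, x ∈ B) ∧
  (∀ B ∈ P, ∀ C ∈ P, B ≠ C → ∀ x ∈ B ∩ C,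
    ((∀ y ∈ B, x ≤ y) ∧ 1 < B.card ∧ (∃ y ∈ C, y < x)) ∨
    ((∀ y ∈ C, x ≤ y) ∧ 1 < C.card ∧ (∃ y ∈ B, y < x)))

/-- In the linear representation there is an arc `(i, j)` iff `i < j` and some
block `B ∈ P` has minimum `i` and contains `j`. -/
def IsArc (P : Finset (Finset ℕ)) (i j : ℕ) : Prop :=
  i < j ∧ ∃ B ∈ P, i ∈ B ∧ j ∈ B ∧ ∀ y ∈ B, i ≤ y

def IsLeftEndpoint (P : Finset (Finset ℕ)) (x : ℕ) : Prop := ∃ j, IsArc P x j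

def IsRightEndpoint (P : Finset (Finset ℕ)) (x : ℕ) : Prop := ∃ i, IsArc P i x

/-- An origin is only a left-hand endpoint. -/
def IsOrigin (P : Finset (Finset ℕ)) (x : ℕ) : Prop :=
  IsLeftEndpoint P x ∧ ¬ IsRightEndpoint P x

/-- A transient is both a left-hand and a right-hand endpoint. -/
def IsTransient (P : Finset (Finset ℕ)) (x : ℕ) : Prop :=
  IsLeftEndpoint P x ∧ IsRightEndpoint P x

/-- A destination is only a right-hand endpoint. -/
def IsDestination (P : Finset (Finset ℕ)) (x : ℕ) : Prop :=
  ¬ IsLeftEndpoint P x ∧ IsRightEndpoint P x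

/-- A singleton is an isolated vertex of `[n]`. -/
def IsSingletonVertex (n : ℕ) (P : Finset (Finset ℕ)) (x : ℕ) : Prop :=
  x ∈ Finset.Icc 1 n ∧ ¬ IsLeftEndpoint P x ∧ ¬ IsRightEndpoint P x

/-- No two arcs cross: there are no arcs `(i₁,j₁)`, `(i₂,j₂)` with
`i₁ < i₂ < j₁ < j₂`. -/
def NoncrossingLP (P : Finset (Finset ℕ)) : Prop :=
  ¬ ∃ i₁ i₂ j₁ j₂ : ℕ, IsArc P i₁ j₁ ∧ IsArc P i₂ j₂ ∧ i₁ < i₂ ∧ i₂ < j₁ ∧ j₁ < j₂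

/-- No two arcs nest: there are no arcs `(i₁,j₁)`, `(i₂,j₂)` with
`i₁ < i₂ < j₂ < j₁`. -/
def NonnestingLP (P : Finset (Finset ℕ)) : Prop :=
  ¬ ∃ i₁ i₂ j₁ j₂ : ℕ, IsArc P i₁ j₁ ∧ IsArc P i₂ j₂ ∧ i₁ < i₂ ∧ i₂ < j₂ ∧ j₂ < j₁

/-- The set of descent positions of a permutation `π₁ ⋯ π_n` (0-indexed:
`i` is a descent iff `π (i+1) < π i`). -/
def descentSet {n : ℕ} (π : Equiv.Perm (Fin n)) : Set (Fin n) :=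
  {i | ∃ h : (i : ℕ) + 1 < n, π ⟨(i : ℕ) + 1, h⟩ < π i}

/-- A permutation tableau of length `n`, encoded via the boundary labeling by
`1,…,n` from the top-right corner to the bottom-left corner (label `m`
corresponds to `(⟨m-1, _⟩ : Fin n)`).  `isRow i = true` iff label `i` labels a
row (the label `1` always labels a row).  The cells of the Ferrers diagram are
exactly the pairs (row `i`, column `j`) with `i < j`; rows above have smaller
labels and columns to the left have larger labels.  `filling i j = true`
records that the cell in row `i` and column `j` exists and contains a `1`
(cells containing `0` and non-cells are `false`).  Every column contains at
least one `1`, and no cell containing a `0` has both a `1` above it in its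
column and a `1` to its left in its row. -/
structure PermTableau (n : ℕ) where
  isRow : Fin n → Bool
  filling : Fin n → Fin n → Bool
  first_row : ∀ h : 0 < n, isRow ⟨0, h⟩ = true
  filling_cells : ∀ i j : Fin n, filling i j = true →
    isRow i = true ∧ isRow j = false ∧ i < j
  col_has_one : ∀ j : Fin n, isRow j = false → ∃ i : Fin n, filling i j = true
  no_bad_zero : ∀ i j : Fin n, isRow i = true → isRow j = false → i < j →
    (∃ i' : Fin n, i' < i ∧ filling i' j = true) →
    (∃ j' : Fin n, j < j' ∧ filling i j' = true) →
    filling i j = true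

namespace PermTableau

variable {n : ℕ}

/-- The diagram has a cell in row `i` and column `j` iff `i < j`. -/
def IsCell (T : PermTableau n) (i j : Fin n) : Prop :=
  T.isRow i = true ∧ T.isRow j = false ∧ i < j

/-- The number of rows. -/
noncomputable def numRows (T : PermTableau n) : ℕ := {i : Fin n | T.isRow i = true}.ncard

/-- The number of columns. -/
noncomputable def numCols (T : PermTableau n) : ℕ := {j : Fin n | T.isRow j = false}.ncard

/-- The cell in row `i`, column `j` contains a topmost `1`: it contains a `1`
and no cell above it in column `j` contains a `1`. -/
def TopmostOne (T : PermTableau n) (i j : Fin n) : Prop :=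
  T.filling i j = true ∧ ∀ i' : Fin n, i' < i → T.filling i' j = false

/-- The cell in row `i`, column `j` contains a restricted `0`: it contains a
`0` and some cell above it in column `j` contains a `1`. -/
def RestrictedZero (T : PermTableau n) (i j : Fin n) : Prop :=
  T.IsCell i j ∧ T.filling i j = false ∧ ∃ i' : Fin n, i' < i ∧ T.filling i' j = true

/-- A rightmost restricted `0` is a restricted `0` that is rightmost (minimal
column label) among the restricted `0`'s in its row. -/
def RightmostRestrictedZero (T : PermTableau n) (i j : Fin n) : Prop :=
  T.RestrictedZero i j ∧ ∀ j' : Fin n, T.RestrictedZero i j' → j ≤ j'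

/-- A cell is dotted if it contains a topmost `1` or a rightmost restricted `0`. -/
def Dotted (T : PermTableau n) (i j : Fin n) : Prop :=
  T.TopmostOne i j ∨ T.RightmostRestrictedZero i j

/-- `T` avoids the pattern `J₂`. -/
def AvoidsJ2 (T : PermTableau n) : Prop :=
  ¬ ∃ i₁ i₂ j₁ j₂ : Fin n,
    T.isRow i₁ = true ∧ T.isRow i₂ = true ∧ T.isRow j₁ = false ∧ T.isRow j₂ = false ∧
    i₁ < i₂ ∧ i₂ < j₁ ∧ j₁ < j₂ ∧
    T.Dotted i₁ j₁ ∧ T.Dotted i₂ j₂ ∧ ¬ T.Dotted i₂ j₁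

/-- `T` avoids the pattern `I₂`. -/
def AvoidsI2 (T : PermTableau n) : Prop :=
  ¬ ∃ i₁ i₂ j₁ j₂ : Fin n,
    T.isRow i₁ = true ∧ T.isRow i₂ = true ∧ T.isRow j₁ = false ∧ T.isRow j₂ = false ∧
    i₁ < i₂ ∧ i₂ < j₁ ∧ j₁ < j₂ ∧
    T.Dotted i₁ j₂ ∧ T.Dotted i₂ j₁ ∧ ¬ T.Dotted i₂ j₂

end PermTableau

/-!
Tableaux and permutations are both built up one label at a time by the same rule, so induction
gives a bijection carrying rows to weak excedances (and unrestricted rows, those without a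
restricted `0`, to left-to-right maxima).

A tableau of length `n + 1` comes from one of length `n` by adding the label `n + 1` either as an
empty bottom row or as a new leftmost column whose `1`s form a nonempty set `S` of unrestricted
rows. The unrestricted rows then become `S` together with the old ones above all of `S` (and the
new row, if there is one).

A permutation of `[n + 1]` comes from a permutation `ρ` of `[n]`, extended by `n + 1 ↦ n + 1`,
and a set `S` of left-to-right maxima of `ρ`, by composing with the cycle through `S ∪ {n + 1}`
in increasing order. Left-to-right maxima change exactly as unrestricted rows do, weak excedances
as rows do (`n + 1` stays one only when `S = ∅`), and `S` is recovered as the left-to-right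
maxima whose value exceeds `π (n + 1)`.
-/

open Finset Equiv

namespace Finset

variable {α : Type*} [LinearOrder α] {C : Finset α} {x y c d : α}

/-- Sends each element of `C` to the next larger one and the largest to the smallest. -/
def cyclicSucc (C : Finset α) : Perm α :=
  (finRotate #C).extendDomain (C.orderIsoOfFin rfl).toEquiv

lemma exists_orderEmbOfFin_eq (hx : x ∈ C) : ∃ t, C.orderEmbOfFin rfl t = x := by
  obtain ⟨t, ht⟩ := (C.orderIsoOfFin rfl).surjective ⟨x, hx⟩
  exact ⟨t, by rw [← coe_orderIsoOfFin_apply, ht]⟩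

lemma cyclicSucc_orderEmbOfFin (t : Fin #C) :
    cyclicSucc C (C.orderEmbOfFin rfl t) = C.orderEmbOfFin rfl (finRotate _ t) := by
  simp only [← coe_orderIsoOfFin_apply]
  exact Perm.extendDomain_apply_image _ _ t

lemma cyclicSucc_apply_of_notMem (hx : x ∉ C) : cyclicSucc C x = x :=
  Perm.extendDomain_apply_not_subtype _ _ hx

lemma cyclicSucc_apply_mem (hx : x ∈ C) : cyclicSucc C x ∈ C := by
  obtain ⟨t, rfl⟩ := exists_orderEmbOfFin_eq hx
  rw [cyclicSucc_orderEmbOfFin]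
  exact orderEmbOfFin_mem _ _ _

lemma cyclicSucc_inv_apply_mem (hy : y ∈ C) : (cyclicSucc C)⁻¹ y ∈ C := by
  by_contra h
  have := cyclicSucc_apply_of_notMem h
  rw [Perm.coe_inv, apply_symm_apply] at this
  exact h (this ▸ hy)

lemma cyclicSucc_inv_apply_of_notMem (hy : y ∉ C) : (cyclicSucc C)⁻¹ y = y :=
  Perm.inv_eq_iff_eq.mpr (cyclicSucc_apply_of_notMem hy).symm

lemma cyclicSucc_mem_Ioc (hx : x ∈ C) (hc : c ∈ C) (hxc : x < c) :
    cyclicSucc C x ∈ Set.Ioc x c := by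
  obtain ⟨t, rfl⟩ := exists_orderEmbOfFin_eq hx
  obtain ⟨u, rfl⟩ := exists_orderEmbOfFin_eq hc
  have htu : t < u := (orderEmbOfFin C rfl).lt_iff_lt.mp hxc
  have hrot : (finRotate _ t : ℕ) = t + 1 := by
    rw [finRotate_apply, Fin.val_add_one_of_lt' (by lia)]
  rw [cyclicSucc_orderEmbOfFin, Set.mem_Ioc, (orderEmbOfFin C rfl).lt_iff_lt,
    (orderEmbOfFin C rfl).le_iff_le, Fin.lt_def, Fin.le_def, hrot]
  lia

lemma cyclicSucc_le_of_forall_le (hx : x ∈ C) (hmax : ∀ c ∈ C, c ≤ x) (hc : c ∈ C) :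
    cyclicSucc C x ≤ c := by
  obtain ⟨t, rfl⟩ := exists_orderEmbOfFin_eq hx
  obtain ⟨u, rfl⟩ := exists_orderEmbOfFin_eq hc
  have htop : (t : ℕ) + 1 = #C := by
    have := (orderEmbOfFin C rfl).le_iff_le.mp
      (hmax _ (orderEmbOfFin_mem C rfl ⟨#C - 1, by have := t.isLt; lia⟩))
    rw [Fin.le_def] at this
    lia
  have hrot : (finRotate _ t : ℕ) = 0 := by
    rw [finRotate_apply, Fin.val_add, Fin.val_one', Nat.add_mod_mod, htop, Nat.mod_self]
  rw [cyclicSucc_orderEmbOfFin, (orderEmbOfFin C rfl).le_iff_le, Fin.le_def, hrot]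
  exact Nat.zero_le _

lemma cyclicSucc_lt_cyclicSucc (hx : x ∈ C) (hc : c ∈ C) (hxc : x < c) (hyx : y < x) :
    cyclicSucc C y < cyclicSucc C x := by
  have hx' := cyclicSucc_mem_Ioc hx hc hxc
  by_cases hy : y ∈ C
  · exact (cyclicSucc_mem_Ioc hy hx hyx).2.trans_lt hx'.1
  · rw [cyclicSucc_apply_of_notMem hy]
    exact hyx.trans hx'.1

lemma exists_lt_lt_cyclicSucc (hx : x ∉ C) (hc : c ∈ C) (hcx : c < x) (hd : d ∈ C)
    (hxd : x < d) : ∃ b ∈ C, b < x ∧ x < cyclicSucc C b := by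
  have hne : (C.filter (· < x)).Nonempty := ⟨c, mem_filter.mpr ⟨hc, hcx⟩⟩
  obtain ⟨hbC, hbx⟩ := mem_filter.mp ((C.filter (· < x)).max'_mem hne)
  set b := (C.filter (· < x)).max' hne
  refine ⟨b, hbC, hbx, lt_of_not_ge fun hle => ?_⟩
  have hb := cyclicSucc_mem_Ioc hbC hd (hbx.trans hxd)
  have hlt : cyclicSucc C b < x :=
    lt_of_le_of_ne hle fun h => hx (h ▸ cyclicSucc_apply_mem hbC)
  exact hb.1.not_ge ((C.filter (· < x)).le_max' _ (mem_filter.mpr ⟨cyclicSucc_apply_mem hbC, hlt⟩))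

lemma cyclicSucc_singleton (a : α) : cyclicSucc {a} = 1 := by
  ext x
  by_cases hx : x = a
  · subst hx
    exact mem_singleton.mp (cyclicSucc_apply_mem (mem_singleton_self x))
  · exact cyclicSucc_apply_of_notMem (by simpa using hx)

end Finset

namespace Fin

variable {n : ℕ}

lemma finset_ext_lastCases {A B : Finset (Fin (n + 1))} (hlast : last n ∈ A ↔ last n ∈ B)
    (hcast : ∀ i : Fin n, i.castSucc ∈ A ↔ i.castSucc ∈ B) : A = B := by
  ext x
  induction x using Fin.lastCases with
  | last => exact hlast
  | cast i => exact hcast i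

@[simp] lemma castSucc_mem_map_castSuccEmb {s : Finset (Fin n)} {i : Fin n} :
    i.castSucc ∈ s.map castSuccEmb ↔ i ∈ s :=
  mem_map' castSuccEmb

@[simp] lemma last_notMem_map_castSuccEmb (s : Finset (Fin n)) : last n ∉ s.map castSuccEmb := by
  simp [castSucc_ne_last]

lemma lt_last_of_mem {S : Finset (Fin (n + 1))} {x : Fin (n + 1)} (hlast : last n ∉ S)
    (hx : x ∈ S) : x < last n :=
  lt_last_iff_ne_last.mpr fun h => hlast (h ▸ hx)

end Fin

section CyclicSuccLast

variable {n : ℕ} {S : Finset (Fin (n + 1))} {x : Fin (n + 1)}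

lemma cyclicSucc_insert_last_le (hx : x ∈ S) :
    cyclicSucc (insert (Fin.last n) S) (Fin.last n) ≤ x :=
  cyclicSucc_le_of_forall_le (mem_insert_self _ _) (fun c _ => Fin.le_last c)
    (mem_insert_of_mem hx)

lemma cyclicSucc_insert_last_eq_last_iff (hlast : Fin.last n ∉ S) :
    cyclicSucc (insert (Fin.last n) S) (Fin.last n) = Fin.last n ↔ S = ∅ := by
  constructor
  · intro h
    by_contra hS
    obtain ⟨s, hs⟩ := nonempty_iff_ne_empty.mpr hS
    exact (Fin.lt_last_of_mem hlast hs).not_ge (h ▸ cyclicSucc_insert_last_le hs)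
  · rintro rfl
    simp [cyclicSucc_singleton]

lemma cyclicSucc_insert_last_mem_Ioc (hlast : Fin.last n ∉ S) (hx : x ∈ S) :
    cyclicSucc (insert (Fin.last n) S) x ∈ Set.Ioc x (Fin.last n) :=
  cyclicSucc_mem_Ioc (mem_insert_of_mem hx) (mem_insert_self _ _) (Fin.lt_last_of_mem hlast hx)

end CyclicSuccLast

def unionLowerBounds {α : Type*} [LinearOrder α] (U S : Finset α) : Finset α :=
  S ∪ U.filter fun u => ∀ s ∈ S, u ≤ s

section Growth

variable {n : ℕ}

abbrev Marked (X : Type*) (f : X → Finset (Fin n)) : Type _ :=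
  {p : X × Finset (Fin n) // p.2 ⊆ f p.1}

def growRows (R S : Finset (Fin n)) : Finset (Fin (n + 1)) :=
  if S = ∅ then insert (Fin.last n) (R.map Fin.castSuccEmb) else R.map Fin.castSuccEmb

def growActive (U S : Finset (Fin n)) : Finset (Fin (n + 1)) :=
  unionLowerBounds (insert (Fin.last n) (U.map Fin.castSuccEmb)) (S.map Fin.castSuccEmb)

end Growth

structure GrowthFamily (A : ℕ → Type*) where
  rows : ∀ n, A n → Finset (Fin n)
  active : ∀ n, A n → Finset (Fin n)
  grow : ∀ n, Marked (A n) (active n) → A (n + 1)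
  grow_bijective : ∀ n, Function.Bijective (grow n)
  rows_grow : ∀ n p, rows (n + 1) (grow n p) = growRows (rows n p.1.1) p.1.2
  active_grow : ∀ n p, active (n + 1) (grow n p) = growActive (active n p.1.1) p.1.2

theorem GrowthFamily.exists_equiv {A B : ℕ → Type*} [Unique (A 0)] [Unique (B 0)]
    (F : GrowthFamily A) (G : GrowthFamily B) (n : ℕ) :
    ∃ Φ : A n ≃ B n, ∀ a, G.rows n (Φ a) = F.rows n a ∧ G.active n (Φ a) = F.active n a := by
  induction n with
  | zero => exact ⟨Equiv.ofUnique _ _, fun _ => ⟨Subsingleton.elim _ _, Subsingleton.elim _ _⟩⟩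
  | succ n ih =>
    obtain ⟨Φ, hΦ⟩ := ih
    let Ψ : Marked (A n) (F.active n) ≃ Marked (B n) (G.active n) :=
      (Equiv.prodCongr Φ (Equiv.refl _)).subtypeEquiv fun p => by simp [(hΦ p.1).2]
    let growA := Equiv.ofBijective _ (F.grow_bijective n)
    refine ⟨growA.symm.trans (Ψ.trans (Equiv.ofBijective _ (G.grow_bijective n))), fun a => ?_⟩
    obtain ⟨p, rfl⟩ := (F.grow_bijective n).2 a
    have hp : growA.symm (F.grow n p) = p := growA.symm_apply_apply p
    simp only [Equiv.trans_apply, hp, Equiv.ofBijective_apply, F.rows_grow, F.active_grow,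
      G.rows_grow, G.active_grow]
    exact ⟨congrArg (growRows · _) (hΦ p.1.1).1, congrArg (growActive · _) (hΦ p.1.1).2⟩

namespace Equiv.Perm

variable {n : ℕ}

def IsLRMax (π : Perm (Fin n)) (i : Fin n) : Prop := ∀ j < i, π j < π i

instance (π : Perm (Fin n)) : DecidablePred π.IsLRMax :=
  fun i => inferInstanceAs (Decidable (∀ j < i, π j < π i))

def lrMaxima (π : Perm (Fin n)) : Finset (Fin n) := univ.filter π.IsLRMax

def topLRMaxima (π : Perm (Fin (n + 1))) : Finset (Fin (n + 1)) :=
  univ.filter fun r => π.IsLRMax r ∧ π (Fin.last n) < π r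

def weakExcedances (π : Perm (Fin n)) : Finset (Fin n) := univ.filter fun i => i ≤ π i

lemma ncard_le_apply_eq_card_weakExcedances (π : Perm (Fin n)) :
    {i : Fin n | i ≤ π i}.ncard = #π.weakExcedances := by
  rw [← Set.ncard_coe_finset, weakExcedances, coe_filter]
  simp

lemma IsLRMax.le_apply {π : Perm (Fin n)} {i : Fin n} (h : π.IsLRMax i) : i ≤ π i := by
  -- the `i + 1` values at positions `≤ i` are all `≤ π i`
  have hsub : (Iic i).image π ⊆ Iic (π i) := by
    simp only [image_subset_iff, mem_Iic]
    exact fun j hj => hj.lt_or_eq.elim (fun hlt => (h j hlt).le) (fun he => he ▸ le_rfl)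
  have := card_le_card hsub
  rw [card_image_of_injective _ π.injective, Fin.card_Iic, Fin.card_Iic] at this
  exact Fin.le_def.mpr (by lia)

lemma exists_isLRMax_le (π : Perm (Fin n)) (y : Fin n) : ∃ b ≤ y, π.IsLRMax b ∧ π y ≤ π b := by
  obtain ⟨b, hb, hmax⟩ := (Iic y).exists_max_image π ⟨y, mem_Iic.mpr le_rfl⟩
  rw [mem_Iic] at hb
  refine ⟨b, hb, fun j hj => ?_, hmax y (mem_Iic.mpr le_rfl)⟩
  exact (hmax j (mem_Iic.mpr (hj.le.trans hb))).lt_of_ne fun he => hj.ne (π.injective he)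

lemma isLRMax_last_iff {π : Perm (Fin (n + 1))} :
    π.IsLRMax (Fin.last n) ↔ π (Fin.last n) = Fin.last n := by
  constructor
  · intro h
    by_contra hne
    have := h (π.symm (Fin.last n)) (Fin.lt_last_iff_ne_last.mpr fun he =>
      hne (π.symm_apply_eq.mp he).symm)
    rw [apply_symm_apply] at this
    exact this.not_ge (Fin.le_last _)
  · intro h j hj
    rw [h]
    exact Fin.lt_last_iff_ne_last.mpr fun he => hj.ne (π.injective (he.trans h.symm))

/-- `ρ` acting on `Fin n ⊆ Fin (n + 1)`, fixing `Fin.last n`. -/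
def extendLast (ρ : Perm (Fin n)) : Perm (Fin (n + 1)) :=
  ofSubtype ((finSuccAboveEquiv (Fin.last n)).permCongr ρ)

@[simp] lemma extendLast_castSucc (ρ : Perm (Fin n)) (i : Fin n) :
    extendLast ρ i.castSucc = (ρ i).castSucc := by
  rw [extendLast, ofSubtype_apply_of_mem (p := (· ≠ Fin.last n)) _ (Fin.castSucc_ne_last i)]
  simp [Equiv.permCongr_apply, finSuccAboveEquiv_apply, finSuccAboveEquiv_symm_apply_last]

@[simp] lemma extendLast_last (ρ : Perm (Fin n)) : extendLast ρ (Fin.last n) = Fin.last n :=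
  ofSubtype_apply_of_not_mem _ (not_not.mpr rfl)

lemma extendLast_injective : Function.Injective (extendLast (n := n)) :=
  ofSubtype_injective.comp (finSuccAboveEquiv (Fin.last n)).permCongr.injective

lemma exists_extendLast_eq {π : Perm (Fin (n + 1))} (h : π (Fin.last n) = Fin.last n) :
    ∃ ρ, extendLast ρ = π := by
  have hfix : ∀ x, π x ≠ x → x ≠ Fin.last n := fun x hx he => hx (he ▸ h)
  refine ⟨(finSuccAboveEquiv (Fin.last n)).permCongr.symm
    (π.subtypePerm fun _ => π.injective.ne_iff' h), ?_⟩
  rw [extendLast, Equiv.apply_symm_apply, ofSubtype_subtypePerm _ hfix]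

lemma isLRMax_extendLast_castSucc {ρ : Perm (Fin n)} {i : Fin n} :
    (extendLast ρ).IsLRMax i.castSucc ↔ ρ.IsLRMax i := by
  constructor
  · intro h j hj
    simpa using h j.castSucc (by simpa using hj)
  · intro h j hj
    obtain ⟨j, rfl⟩ := Fin.exists_castSucc_eq.mpr (hj.trans (Fin.castSucc_lt_last i)).ne
    simpa using h j (by simpa using hj)

lemma lrMaxima_extendLast (ρ : Perm (Fin n)) :
    lrMaxima (extendLast ρ) = insert (Fin.last n) ((lrMaxima ρ).map Fin.castSuccEmb) := by
  refine Fin.finset_ext_lastCases ?_ fun i => ?_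
  · simp [lrMaxima, isLRMax_last_iff]
  · simp [lrMaxima, isLRMax_extendLast_castSucc, Fin.castSucc_ne_last]

lemma weakExcedances_extendLast (ρ : Perm (Fin n)) :
    weakExcedances (extendLast ρ) =
      insert (Fin.last n) ((weakExcedances ρ).map Fin.castSuccEmb) := by
  refine Fin.finset_ext_lastCases ?_ fun i => ?_
  · simp [weakExcedances]
  · simp [weakExcedances, Fin.castSucc_ne_last]

end Equiv.Perm

namespace Equiv.Perm

section MulCyclicSucc

variable {n : ℕ} {P : Perm (Fin (n + 1))} {S : Finset (Fin (n + 1))} {x : Fin (n + 1)}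

lemma isLRMax_of_mem_insert_last (hP : P (Fin.last n) = Fin.last n) (hS : S ⊆ lrMaxima P)
    {c : Fin (n + 1)} (hc : c ∈ insert (Fin.last n) S) : P.IsLRMax c := by
  rcases mem_insert.mp hc with rfl | hc
  · exact isLRMax_last_iff.mpr hP
  · exact (mem_filter.mp (hS hc)).2

lemma isLRMax_cyclicSucc_apply (hP : P (Fin.last n) = Fin.last n) (hS : S ⊆ lrMaxima P)
    (hx : x ∈ insert (Fin.last n) S) : P.IsLRMax (cyclicSucc (insert (Fin.last n) S) x) :=
  isLRMax_of_mem_insert_last hP hS (cyclicSucc_apply_mem hx)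

lemma mul_cyclicSucc_last_eq_last_iff (hP : P (Fin.last n) = Fin.last n)
    (hlast : Fin.last n ∉ S) :
    (P * cyclicSucc (insert (Fin.last n) S)) (Fin.last n) = Fin.last n ↔ S = ∅ := by
  rw [mul_apply, ← cyclicSucc_insert_last_eq_last_iff hlast, ← hP, P.injective.eq_iff, hP]

lemma isLRMax_mul_cyclicSucc_of_mem (hP : P (Fin.last n) = Fin.last n) (hS : S ⊆ lrMaxima P)
    (hlast : Fin.last n ∉ S) (hx : x ∈ S) :
    (P * cyclicSucc (insert (Fin.last n) S)).IsLRMax x := by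
  intro y hy
  have hC : x ∈ insert (Fin.last n) S := mem_insert_of_mem hx
  exact isLRMax_cyclicSucc_apply hP hS hC _ (cyclicSucc_lt_cyclicSucc hC (mem_insert_self _ _)
    (Fin.lt_last_of_mem hlast hx) hy)

lemma isLRMax_mul_cyclicSucc_iff_of_notMem (hP : P (Fin.last n) = Fin.last n)
    (hS : S ⊆ lrMaxima P) (hx : x ∉ insert (Fin.last n) S) :
    (P * cyclicSucc (insert (Fin.last n) S)).IsLRMax x ↔ P.IsLRMax x ∧ ∀ s ∈ S, x ≤ s := by
  set C := insert (Fin.last n) S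
  have hxlast : x < Fin.last n :=
    Fin.lt_last_iff_ne_last.mpr fun h => hx (h ▸ mem_insert_self _ _)
  have hfix (hle : ∀ s ∈ S, x ≤ s) : ∀ y ≤ x, (P * cyclicSucc C) y = P y := by
    intro y hy
    rw [mul_apply, cyclicSucc_apply_of_notMem]
    intro hyC
    rcases mem_insert.mp hyC with rfl | hyS
    · exact hxlast.not_ge hy
    · exact hx (le_antisymm hy (hle y hyS) ▸ mem_insert_of_mem hyS)
  constructor
  · intro h
    have hle : ∀ s ∈ S, x ≤ s := by
      intro s hs
      by_contra! hsx
      -- some `b < x` of the chain is cycled past `x`, so `π b > P x = π x`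
      obtain ⟨b, hbC, hbx, hxb⟩ := exists_lt_lt_cyclicSucc hx (mem_insert_of_mem hs) hsx
        (mem_insert_self _ _) hxlast
      have hb := h b hbx
      rw [mul_apply, mul_apply, cyclicSucc_apply_of_notMem hx] at hb
      exact lt_asymm hb (isLRMax_cyclicSucc_apply hP hS hbC x hxb)
    refine ⟨fun y hy => ?_, hle⟩
    simpa only [hfix hle y hy.le, hfix hle x le_rfl] using h y hy
  · rintro ⟨h, hle⟩ y hy
    rw [hfix hle y hy.le, hfix hle x le_rfl]
    exact h y hy

lemma lrMaxima_mul_cyclicSucc (hP : P (Fin.last n) = Fin.last n) (hS : S ⊆ lrMaxima P)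
    (hlast : Fin.last n ∉ S) :
    lrMaxima (P * cyclicSucc (insert (Fin.last n) S)) = unionLowerBounds (lrMaxima P) S := by
  ext x
  simp only [lrMaxima, unionLowerBounds, mem_union, mem_filter, mem_univ, true_and]
  by_cases hxS : x ∈ S
  · simp only [hxS, isLRMax_mul_cyclicSucc_of_mem hP hS hlast hxS, true_or]
  by_cases hx : x = Fin.last n
  · subst hx
    rw [isLRMax_last_iff, mul_cyclicSucc_last_eq_last_iff hP hlast, isLRMax_last_iff]
    simp only [hxS, hP, true_and, false_or, eq_empty_iff_forall_notMem, Fin.last_le_iff]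
    exact forall_congr' fun s => ⟨fun h hs => (h hs).elim, fun h hs => hlast (h hs ▸ hs)⟩
  · rw [isLRMax_mul_cyclicSucc_iff_of_notMem hP hS (by simp [hx, hxS])]
    simp [hxS]

lemma weakExcedances_mul_cyclicSucc (hP : P (Fin.last n) = Fin.last n) (hS : S ⊆ lrMaxima P)
    (hlast : Fin.last n ∉ S) :
    weakExcedances (P * cyclicSucc (insert (Fin.last n) S)) =
      if S = ∅ then weakExcedances P else (weakExcedances P).erase (Fin.last n) := by
  split_ifs with hS0
  · simp [hS0, cyclicSucc_singleton]
  ext x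
  simp only [weakExcedances, mem_erase, mem_filter, mem_univ, true_and]
  by_cases hxS : x ∈ S
  · have hσ := cyclicSucc_insert_last_mem_Ioc hlast hxS
    refine iff_of_true ?_ ⟨(Fin.lt_last_of_mem hlast hxS).ne,
      (isLRMax_of_mem_insert_last hP hS (mem_insert_of_mem hxS)).le_apply⟩
    exact hσ.1.le.trans (isLRMax_cyclicSucc_apply hP hS (mem_insert_of_mem hxS)).le_apply
  by_cases hx : x = Fin.last n
  · subst hx
    simp only [Fin.last_le_iff, mul_cyclicSucc_last_eq_last_iff hP hlast, hS0, ne_eq,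
      not_true_eq_false, false_and]
  · rw [mul_apply, cyclicSucc_apply_of_notMem (by simp [hx, hxS])]
    exact ⟨fun h => ⟨hx, h⟩, And.right⟩

lemma topLRMaxima_mul_cyclicSucc (hP : P (Fin.last n) = Fin.last n) (hS : S ⊆ lrMaxima P)
    (hlast : Fin.last n ∉ S) : topLRMaxima (P * cyclicSucc (insert (Fin.last n) S)) = S := by
  set C := insert (Fin.last n) S
  ext r
  simp only [topLRMaxima, mem_filter, mem_univ, true_and]
  constructor
  · rintro ⟨hr, hlt⟩
    by_contra hrS
    have hrC : r ∉ C := by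
      rintro hrC
      rcases mem_insert.mp hrC with rfl | h
      · exact hlt.false
      · exact hrS h
    obtain ⟨-, hle⟩ := (isLRMax_mul_cyclicSucc_iff_of_notMem hP hS hrC).mp hr
    rw [mul_apply, mul_apply, cyclicSucc_apply_of_notMem hrC] at hlt
    by_cases hS0 : S = ∅
    · rw [(cyclicSucc_insert_last_eq_last_iff hlast).mpr hS0, hP] at hlt
      exact (Fin.le_last _).not_gt hlt
    have hσS : cyclicSucc C (Fin.last n) ∈ S :=
      (mem_insert.mp (cyclicSucc_apply_mem (mem_insert_self _ _))).resolve_left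
        (mt (cyclicSucc_insert_last_eq_last_iff hlast).mp hS0)
    have hrσ : r < cyclicSucc C (Fin.last n) :=
      (hle _ hσS).lt_of_ne fun h => hrS (h ▸ hσS)
    exact lt_asymm hlt (isLRMax_cyclicSucc_apply hP hS (mem_insert_self _ _) r hrσ)
  · intro hr
    refine ⟨isLRMax_mul_cyclicSucc_of_mem hP hS hlast hr, ?_⟩
    exact isLRMax_cyclicSucc_apply hP hS (mem_insert_of_mem hr) _
      ((cyclicSucc_insert_last_le hr).trans_lt (cyclicSucc_insert_last_mem_Ioc hlast hr).1)

end MulCyclicSucc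

end Equiv.Perm

namespace Equiv.Perm

section TopLRMaxima

variable {n : ℕ} (π : Perm (Fin (n + 1)))

lemma last_notMem_topLRMaxima : Fin.last n ∉ topLRMaxima π := by
  simp [topLRMaxima]

variable {π}

lemma isLRMax_of_mem_topLRMaxima {r : Fin (n + 1)} (hr : r ∈ topLRMaxima π) : π.IsLRMax r :=
  (mem_filter.mp hr).2.1

lemma apply_last_lt_of_mem_topLRMaxima {r : Fin (n + 1)} (hr : r ∈ topLRMaxima π) :
    π (Fin.last n) < π r :=
  (mem_filter.mp hr).2.2

lemma inv_last_mem_topLRMaxima (h : π (Fin.last n) ≠ Fin.last n) :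
    π⁻¹ (Fin.last n) ∈ topLRMaxima π := by
  have hlt : ∀ j, j ≠ π⁻¹ (Fin.last n) → π j < Fin.last n := fun j hj =>
    Fin.lt_last_iff_ne_last.mpr fun he => hj (eq_inv_iff_eq.mpr he)
  refine mem_filter.mpr ⟨mem_univ _, fun j hj => ?_, ?_⟩ <;> rw [coe_inv, apply_symm_apply]
  · exact hlt j hj.ne
  · exact hlt _ fun he => h (inv_eq_iff_eq.mp he.symm).symm

lemma apply_le_last_or_exists_mem_topLRMaxima (y : Fin (n + 1)) :
    π y ≤ π (Fin.last n) ∨ ∃ b ∈ topLRMaxima π, b ≤ y ∧ π y ≤ π b := by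
  obtain ⟨b, hby, hb, hyb⟩ := π.exists_isLRMax_le y
  by_cases hlast : π b ≤ π (Fin.last n)
  · exact Or.inl (hyb.trans hlast)
  · exact Or.inr ⟨b, mem_filter.mpr ⟨mem_univ _, hb, not_le.mp hlast⟩, hby, hyb⟩

lemma apply_lt_apply_of_cyclicSucc_lt {p q : Fin (n + 1)}
    (hq : q ∈ insert (Fin.last n) (topLRMaxima π)) (hp : p ∈ insert (Fin.last n) (topLRMaxima π))
    (h : cyclicSucc (insert (Fin.last n) (topLRMaxima π)) q <
      cyclicSucc (insert (Fin.last n) (topLRMaxima π)) p) : π q < π p := by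
  have hpT : p ∈ topLRMaxima π := by
    refine (mem_insert.mp hp).resolve_left fun hpl => h.not_ge ?_
    rw [hpl]
    exact cyclicSucc_le_of_forall_le (mem_insert_self _ _) (fun c _ => Fin.le_last c)
      (cyclicSucc_apply_mem hq)
  rcases mem_insert.mp hq with rfl | hqT
  · exact apply_last_lt_of_mem_topLRMaxima hpT
  refine isLRMax_of_mem_topLRMaxima hpT q (lt_of_not_ge fun hpq => ?_)
  rcases hpq.lt_or_eq with hpq | rfl
  · exact h.not_gt (cyclicSucc_lt_cyclicSucc hq (mem_insert_self _ _)
      (Fin.lt_last_of_mem (last_notMem_topLRMaxima π) hqT) hpq)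
  · exact h.false

lemma apply_lt_apply_of_lt_cyclicSucc {p y : Fin (n + 1)}
    (hy : y ∉ insert (Fin.last n) (topLRMaxima π)) (hp : p ∈ insert (Fin.last n) (topLRMaxima π))
    (h : y < cyclicSucc (insert (Fin.last n) (topLRMaxima π)) p) : π y < π p := by
  have hyp : y ≠ p := fun he => hy (he ▸ hp)
  rcases apply_le_last_or_exists_mem_topLRMaxima y with hlast | ⟨b, hbT, hby, hyb⟩
  · rcases mem_insert.mp hp with rfl | hpT
    · exact hlast.lt_of_ne (π.injective.ne hyp)
    · exact hlast.trans_lt (apply_last_lt_of_mem_topLRMaxima hpT)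
  have hbp : b ≤ p := by
    by_contra! hpb
    exact h.not_ge ((cyclicSucc_mem_Ioc hp (mem_insert_of_mem hbT) hpb).2.trans hby)
  have hpT : p ∈ topLRMaxima π := by
    refine (mem_insert.mp hp).resolve_left fun hpl => h.not_ge ?_
    rw [hpl]
    exact (cyclicSucc_insert_last_le hbT).trans hby
  refine (hyb.trans ?_).lt_of_ne (π.injective.ne hyp)
  rcases hbp.lt_or_eq with hbp | rfl
  · exact (isLRMax_of_mem_topLRMaxima hpT b hbp).le
  · exact le_rfl

lemma cyclicSucc_inv_last :
    cyclicSucc (insert (Fin.last n) (topLRMaxima π)) (π⁻¹ (Fin.last n)) = Fin.last n := by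
  have hlast := last_notMem_topLRMaxima π
  by_cases hπ : π (Fin.last n) = Fin.last n
  · have hT : topLRMaxima π = ∅ := eq_empty_iff_forall_notMem.mpr fun r hr =>
      (apply_last_lt_of_mem_topLRMaxima hr).not_ge (hπ.symm ▸ Fin.le_last _)
    rw [inv_eq_iff_eq.mpr hπ.symm, (cyclicSucc_insert_last_eq_last_iff hlast).mpr hT]
  -- `π⁻¹ (last n)` is the largest element of `topLRMaxima π`: a larger one would exceed `last n`
  have ht := inv_last_mem_topLRMaxima hπ
  have hσt := cyclicSucc_insert_last_mem_Ioc hlast ht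
  refine (mem_insert.mp (cyclicSucc_apply_mem (mem_insert_of_mem ht))).resolve_right fun hσT => ?_
  have := isLRMax_of_mem_topLRMaxima hσT _ hσt.1
  simp only [coe_inv, apply_symm_apply] at this
  exact this.not_ge (Fin.le_last _)

lemma mul_cyclicSucc_inv_last :
    (π * (cyclicSucc (insert (Fin.last n) (topLRMaxima π)))⁻¹) (Fin.last n) = Fin.last n := by
  rw [mul_apply, inv_eq_iff_eq.mpr cyclicSucc_inv_last.symm]
  simp

lemma topLRMaxima_subset_lrMaxima_mul_cyclicSucc_inv :
    topLRMaxima π ⊆ lrMaxima (π * (cyclicSucc (insert (Fin.last n) (topLRMaxima π)))⁻¹) := by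
  intro s hs
  refine mem_filter.mpr ⟨mem_univ _, fun y hy => ?_⟩
  have hp : (cyclicSucc (insert (Fin.last n) (topLRMaxima π)))⁻¹ s ∈
      insert (Fin.last n) (topLRMaxima π) := cyclicSucc_inv_apply_mem (mem_insert_of_mem hs)
  rw [mul_apply, mul_apply]
  by_cases hyC : y ∈ insert (Fin.last n) (topLRMaxima π)
  · exact apply_lt_apply_of_cyclicSucc_lt (cyclicSucc_inv_apply_mem hyC) hp (by simpa using hy)
  · rw [cyclicSucc_inv_apply_of_notMem hyC]
    exact apply_lt_apply_of_lt_cyclicSucc hyC hp (by simpa using hy)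

end TopLRMaxima

end Equiv.Perm

namespace Equiv.Perm

variable {n : ℕ}

def grow (p : Marked (Perm (Fin n)) lrMaxima) : Perm (Fin (n + 1)) :=
  extendLast p.1.1 * cyclicSucc (insert (Fin.last n) (p.1.2.map Fin.castSuccEmb))

lemma map_subset_lrMaxima_extendLast {ρ : Perm (Fin n)} {S : Finset (Fin n)}
    (hS : S ⊆ lrMaxima ρ) : S.map Fin.castSuccEmb ⊆ lrMaxima (extendLast ρ) := by
  rw [lrMaxima_extendLast]
  exact (map_subset_map.mpr hS).trans (subset_insert _ _)

lemma topLRMaxima_grow (p : Marked (Perm (Fin n)) lrMaxima) :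
    topLRMaxima (grow p) = p.1.2.map Fin.castSuccEmb :=
  topLRMaxima_mul_cyclicSucc (extendLast_last _) (map_subset_lrMaxima_extendLast p.2)
    (Fin.last_notMem_map_castSuccEmb _)

lemma grow_injective : Function.Injective (grow (n := n)) := by
  rintro ⟨⟨ρ, S⟩, hS⟩ ⟨⟨ρ', S'⟩, hS'⟩ h
  have hSS' : S = S' := map_injective Fin.castSuccEmb <| by
    rw [← topLRMaxima_grow ⟨(ρ, S), hS⟩, ← topLRMaxima_grow ⟨(ρ', S'), hS'⟩, h]
  subst hSS'
  have hρρ' : ρ = ρ' := extendLast_injective (mul_right_cancel h)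
  subst hρρ'
  rfl

lemma grow_surjective : Function.Surjective (grow (n := n)) := by
  intro π
  have hT : topLRMaxima π ⊆ univ.map Fin.castSuccEmb := by
    rw [← Fin.Iio_last_eq_map]
    exact fun r hr => mem_Iio.mpr (Fin.lt_last_of_mem (last_notMem_topLRMaxima π) hr)
  obtain ⟨S, -, hS⟩ := subset_map_iff.mp hT
  obtain ⟨ρ, hρ⟩ := exists_extendLast_eq (mul_cyclicSucc_inv_last (π := π))
  have hsub : S ⊆ lrMaxima ρ := by
    intro i hi
    have := topLRMaxima_subset_lrMaxima_mul_cyclicSucc_inv (hS ▸ mem_map_of_mem _ hi)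
    rw [← hρ, lrMaxima_extendLast] at this
    simpa [Fin.castSucc_ne_last] using this
  refine ⟨⟨(ρ, S), hsub⟩, ?_⟩
  rw [grow, hρ, ← hS, inv_mul_cancel_right]

lemma weakExcedances_grow (p : Marked (Perm (Fin n)) lrMaxima) :
    weakExcedances (grow p) = growRows (weakExcedances p.1.1) p.1.2 := by
  rw [grow, weakExcedances_mul_cyclicSucc (extendLast_last _) (map_subset_lrMaxima_extendLast p.2)
    (Fin.last_notMem_map_castSuccEmb _), weakExcedances_extendLast, growRows,
    erase_insert (Fin.last_notMem_map_castSuccEmb _)]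
  simp only [map_eq_empty]

lemma lrMaxima_grow (p : Marked (Perm (Fin n)) lrMaxima) :
    lrMaxima (grow p) = growActive (lrMaxima p.1.1) p.1.2 := by
  rw [grow, lrMaxima_mul_cyclicSucc (extendLast_last _) (map_subset_lrMaxima_extendLast p.2)
    (Fin.last_notMem_map_castSuccEmb _), lrMaxima_extendLast, growActive]

def growthFamily : GrowthFamily fun n => Perm (Fin n) where
  rows _ := weakExcedances
  active _ := lrMaxima
  grow _ := grow
  grow_bijective _ := ⟨grow_injective, grow_surjective⟩
  rows_grow _ := weakExcedances_grow
  active_grow _ := lrMaxima_grow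

end Equiv.Perm

namespace PermTableau

variable {n : ℕ}

theorem ext {T T' : PermTableau n} (hrow : T.isRow = T'.isRow) (hfill : T.filling = T'.filling) :
    T = T' := by
  cases T; cases T'; simp_all

instance : Unique (PermTableau 0) where
  default := ⟨finZeroElim, finZeroElim, fun h => absurd h (lt_irrefl 0), finZeroElim, finZeroElim,
    finZeroElim⟩
  uniq _ := ext (funext finZeroElim) (funext finZeroElim)

def rows (T : PermTableau n) : Finset (Fin n) := univ.filter fun i => T.isRow i = true

lemma numRows_eq_card_rows (T : PermTableau n) : T.numRows = #T.rows := by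
  rw [numRows, ← Set.ncard_coe_finset, rows, coe_filter]
  simp

open scoped Classical in
noncomputable def unrestrictedRows (T : PermTableau n) : Finset (Fin n) :=
  univ.filter fun i => T.isRow i = true ∧ ∀ j, ¬ T.RestrictedZero i j

lemma mem_unrestrictedRows {T : PermTableau n} {i : Fin n} :
    i ∈ T.unrestrictedRows ↔ T.isRow i = true ∧ ∀ j, ¬ T.RestrictedZero i j := by
  simp [unrestrictedRows]

lemma filling_last (T : PermTableau (n + 1)) (j : Fin (n + 1)) : T.filling (Fin.last n) j = false :=
  Bool.eq_false_iff.mpr fun h => (Fin.le_last j).not_gt (T.filling_cells _ _ h).2.2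

lemma not_restrictedZero_last (T : PermTableau (n + 1)) (j : Fin (n + 1)) :
    ¬ T.RestrictedZero (Fin.last n) j :=
  fun h => (Fin.le_last j).not_gt h.1.2.2

def restrict (T : PermTableau (n + 1)) : PermTableau n where
  isRow i := T.isRow i.castSucc
  filling i j := T.filling i.castSucc j.castSucc
  first_row h := T.first_row (Nat.succ_pos n)
  filling_cells i j hf := by
    simpa using T.filling_cells _ _ hf
  col_has_one j hj := by
    obtain ⟨i, hi⟩ := T.col_has_one j.castSucc hj
    have hne : i ≠ Fin.last n := fun he => by simp [he, filling_last] at hi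
    exact ⟨i.castPred hne, by simpa using hi⟩
  no_bad_zero i j hi hj hij := fun ⟨i', hi', hf⟩ ⟨j', hj', hf'⟩ =>
    T.no_bad_zero _ _ hi hj (by simpa using hij) ⟨i'.castSucc, by simpa using hi', hf⟩
      ⟨j'.castSucc, by simpa using hj', hf'⟩

def lastColumn (T : PermTableau (n + 1)) : Finset (Fin n) :=
  univ.filter fun i => T.filling i.castSucc (Fin.last n) = true

lemma lastColumn_subset_unrestrictedRows (T : PermTableau (n + 1)) :
    T.lastColumn ⊆ T.restrict.unrestrictedRows := by
  intro i hi
  have hi : T.filling i.castSucc (Fin.last n) = true := (mem_filter.mp hi).2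
  refine mem_unrestrictedRows.mpr ⟨(T.filling_cells _ _ hi).1, ?_⟩
  rintro j ⟨⟨hri, hcj, hij⟩, hzero, i', hi', hone⟩
  -- a `1` above and the `1` in the last column to the left force a `1` in cell `(i, j)`
  have := T.no_bad_zero i.castSucc j.castSucc hri hcj (by simpa using hij)
    ⟨i'.castSucc, by simpa using hi', hone⟩ ⟨Fin.last n, Fin.castSucc_lt_last j, hi⟩
  exact Bool.false_ne_true (hzero.symm.trans this)

lemma isRow_last_eq (T : PermTableau (n + 1)) :
    T.isRow (Fin.last n) = decide (T.lastColumn = ∅) := by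
  simp only [lastColumn, filter_eq_empty_iff, mem_univ, true_implies, Bool.not_eq_true]
  cases h : T.isRow (Fin.last n) <;> symm
  · obtain ⟨i, hi⟩ := T.col_has_one _ h
    have hne : i ≠ Fin.last n := fun he => by simp [he, filling_last] at hi
    rw [decide_eq_false_iff_not]
    intro hall
    simpa [hi] using @hall (i.castPred hne)
  · rw [decide_eq_true_iff]
    exact fun i => Bool.eq_false_iff.mpr fun hi => by simp [(T.filling_cells _ _ hi).2.1] at h

/-- Adds the label `n + 1` to `p.1.1`: an empty bottom row if `p.1.2 = ∅`, and otherwise a new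
leftmost column whose `1`s are in the rows of `p.1.2`. -/
def grow (p : Marked (PermTableau n) unrestrictedRows) : PermTableau (n + 1) where
  isRow := Fin.snoc p.1.1.isRow (decide (p.1.2 = ∅))
  filling := Fin.snoc (fun i => Fin.snoc (p.1.1.filling i) (decide (i ∈ p.1.2))) fun _ => false
  first_row h := by
    rcases n with _ | n
    · simp [Fin.snoc, Finset.eq_empty_of_isEmpty p.1.2]
    · simpa [Fin.snoc] using p.1.1.first_row n.succ_pos
  filling_cells x y hf := by
    induction x using Fin.lastCases with
    | last => simp at hf
    | cast i =>
      induction y using Fin.lastCases with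
      | last =>
        have hi : i ∈ p.1.2 := by simpa using hf
        simpa [ne_empty_of_mem hi] using (mem_unrestrictedRows.mp (p.2 hi)).1
      | cast j => simpa using p.1.1.filling_cells i j (by simpa using hf)
  col_has_one y hy := by
    induction y using Fin.lastCases with
    | last =>
      obtain ⟨s, hs⟩ := nonempty_iff_ne_empty.mpr (by simpa using hy)
      exact ⟨s.castSucc, by simpa using hs⟩
    | cast j =>
      obtain ⟨i, hi⟩ := p.1.1.col_has_one j (by simpa using hy)
      exact ⟨i.castSucc, by simpa using hi⟩
  no_bad_zero x y hx hy hxy h1 h2 := by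
    obtain ⟨j', hyj', hj'⟩ := h2
    induction y using Fin.lastCases with
    | last => exact absurd hyj' (Fin.le_last j').not_gt
    | cast j =>
    induction x using Fin.lastCases with
    | last => exact absurd hxy (Fin.castSucc_lt_last j).not_gt
    | cast i =>
    obtain ⟨i', hi', hone⟩ := h1
    obtain ⟨i', rfl⟩ := Fin.exists_castSucc_eq.mpr (hi'.trans (Fin.castSucc_lt_last i)).ne
    simp only [Fin.snoc_castSucc, Fin.castSucc_lt_castSucc_iff] at hx hy hxy hi' hone ⊢
    induction j' using Fin.lastCases with
    | last =>
      -- row `i` has a `1` in the new column, so it was unrestricted: no `0` below a `1` in it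
      have hi : i ∈ p.1.2 := by simpa using hj'
      by_contra hzero
      exact (mem_unrestrictedRows.mp (p.2 hi)).2 j
        ⟨⟨hx, hy, hxy⟩, by simpa using hzero, i', hi', hone⟩
    | cast j' =>
      exact p.1.1.no_bad_zero i j hx hy hxy ⟨i', hi', hone⟩
        ⟨j', by simpa using hyj', by simpa using hj'⟩

section grow

variable (p : Marked (PermTableau n) unrestrictedRows) (i j : Fin n)

@[simp] lemma grow_isRow_castSucc : (grow p).isRow i.castSucc = p.1.1.isRow i := by simp [grow]

@[simp] lemma grow_isRow_last : (grow p).isRow (Fin.last n) = decide (p.1.2 = ∅) := by simp [grow]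

@[simp] lemma grow_filling_castSucc :
    (grow p).filling i.castSucc j.castSucc = p.1.1.filling i j := by simp [grow]

@[simp] lemma grow_filling_castSucc_last :
    (grow p).filling i.castSucc (Fin.last n) = decide (i ∈ p.1.2) := by simp [grow]

lemma restrict_grow : (grow p).restrict = p.1.1 :=
  ext (funext fun i => grow_isRow_castSucc p i) (funext₂ fun i j => grow_filling_castSucc p i j)

lemma lastColumn_grow : (grow p).lastColumn = p.1.2 := by
  ext i
  simp [lastColumn]

end grow

lemma grow_injective : Function.Injective (grow (n := n)) := by
  intro p q h
  have hT : p.1.1 = q.1.1 := by rw [← restrict_grow p, ← restrict_grow q, h]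
  have hS : p.1.2 = q.1.2 := by rw [← lastColumn_grow p, ← lastColumn_grow q, h]
  exact Subtype.ext (Prod.ext hT hS)

lemma grow_surjective : Function.Surjective (grow (n := n)) := by
  intro T
  refine ⟨⟨(T.restrict, T.lastColumn), T.lastColumn_subset_unrestrictedRows⟩, ext ?_ ?_⟩
  · funext x
    induction x using Fin.lastCases with
    | last => rw [grow_isRow_last, isRow_last_eq]
    | cast i => exact grow_isRow_castSucc _ i
  · funext x y
    induction x using Fin.lastCases with
    | last => simp [grow, filling_last]
    | cast i =>
      induction y using Fin.lastCases with
      | last => simp [lastColumn]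
      | cast j => exact grow_filling_castSucc _ i j

lemma rows_grow (p : Marked (PermTableau n) unrestrictedRows) :
    rows (grow p) = growRows (rows p.1.1) p.1.2 := by
  by_cases hS : p.1.2 = ∅ <;> refine Fin.finset_ext_lastCases ?_ fun i => ?_ <;>
    simp [rows, growRows, hS]

lemma exists_restrictedZero_grow_castSucc_iff (p : Marked (PermTableau n) unrestrictedRows)
    {i : Fin n} (hi : p.1.1.isRow i = true) :
    (∃ j, (grow p).RestrictedZero i.castSucc j) ↔
      (∃ j, p.1.1.RestrictedZero i j) ∨ (i ∉ p.1.2 ∧ ∃ s ∈ p.1.2, s < i) := by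
  have hlast : ¬ Fin.last n < i.castSucc := (Fin.castSucc_lt_last i).not_gt
  simp only [RestrictedZero, IsCell, Fin.exists_fin_succ', hlast, grow_isRow_castSucc, hi,
    Fin.castSucc_lt_castSucc_iff, true_and, grow_filling_castSucc, false_and, or_false,
    grow_isRow_last, decide_eq_false_iff_not, Fin.castSucc_lt_last, and_true,
    grow_filling_castSucc_last, decide_eq_true_eq]
  refine or_congr Iff.rfl ⟨fun ⟨_, h, s, hsi, hs⟩ => ⟨h, s, hs, hsi⟩,
    fun ⟨h, s, hs, hsi⟩ => ⟨ne_empty_of_mem hs, h, s, hsi, hs⟩⟩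

lemma unrestrictedRows_grow (p : Marked (PermTableau n) unrestrictedRows) :
    unrestrictedRows (grow p) = growActive (unrestrictedRows p.1.1) p.1.2 := by
  refine Fin.finset_ext_lastCases ?_ fun i => ?_
  · simp [mem_unrestrictedRows, not_restrictedZero_last, growActive, unionLowerBounds,
      Fin.castSucc_ne_last, eq_empty_iff_forall_notMem]
  simp only [mem_unrestrictedRows, grow_isRow_castSucc, ← not_exists, growActive,
    unionLowerBounds, mem_union, mem_filter, Fin.castSucc_mem_map_castSuccEmb, mem_insert,
    Fin.castSucc_ne_last, false_or, forall_mem_map, Fin.castSuccEmb_apply,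
    Fin.castSucc_le_castSucc_iff]
  by_cases hrow : p.1.1.isRow i = true
  · rw [exists_restrictedZero_grow_castSucc_iff p hrow]
    by_cases hiS : i ∈ p.1.2
    · simpa [hiS, hrow] using (mem_unrestrictedRows.mp (p.2 hiS)).2
    · simp [hiS, hrow]
  · have hS : i ∉ p.1.2 := fun hi => hrow (mem_unrestrictedRows.mp (p.2 hi)).1
    simp [hrow, hS]

noncomputable def growthFamily : GrowthFamily PermTableau where
  rows _ := rows
  active _ := unrestrictedRows
  grow _ := grow
  grow_bijective _ := ⟨grow_injective, grow_surjective⟩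
  rows_grow _ := rows_grow
  active_grow _ := unrestrictedRows_grow

end PermTableau

theorem tableaux_rows_eq_perms_weakExcedances_general (n k : ℕ) :
    Nat.card {T : PermTableau n // T.numRows = k} =
      Nat.card {π : Equiv.Perm (Fin n) // {i : Fin n | i ≤ π i}.ncard = k} := by
  obtain ⟨Φ, hΦ⟩ := PermTableau.growthFamily.exists_equiv Perm.growthFamily n
  refine Nat.card_congr (Φ.subtypeEquiv fun T => ?_)
  rw [PermTableau.numRows_eq_card_rows, Perm.ncard_le_apply_eq_card_weakExcedances]
  exact iff_of_eq (congrArg (#· = k) (hΦ T).1.symm)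

/-- The number of permutation tableaux of length `n` with exactly `k` rows
equals the number of permutations of `[n]` with exactly `k` weak excedances. -/
theorem tableaux_rows_eq_perms_weakExcedances (n k : ℕ) (hn : 1 ≤ n) (hk : 1 ≤ k)
    (hkn : k ≤ n) :
    Nat.card {T : PermTableau n // T.numRows = k} =
      Nat.card {π : Equiv.Perm (Fin n) // {i : Fin n | i ≤ π i}.ncard = k} :=
  tableaux_rows_eq_perms_weakExcedances_general n k
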